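/- Let (uᵢ, wᵢ), i = 1,…,n, be i.i.d. mean-zero random vectors in ℝ² with E[uᵢwᵢ] = 0, E[uᵢ³wᵢ] finite, and let P be a fixed n×n symmetric idempotent matrix of rank k. Then Cov(uᵀPu, uᵀPw) = E[u₁³w₁] ∑ᵢ Pᵢᵢ². Consequently, if (1/k)∑ᵢ Pᵢᵢ² → 0 and all moments are bounded, the normalized quantities (uᵀPu − kσ_u²)/√k and uᵀPw/√k are asymptotically uncorrelated. -/

import Mathlib

open Matrix MeasureTheory Filter

section AuxCovQuadratic

lemma aux_pi_integral' {n : ℕ} (ν : Measure (ℝ × ℝ)) [SigmaFinite ν]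
    (f : Fin n → (ℝ × ℝ) → ℝ) :
    ∫ y, ∏ m, f m (y m) ∂(Measure.pi fun _ : Fin n => ν) = ∏ m, ∫ p, f m p ∂ν := by
  letI : MeasureSpace (ℝ × ℝ) := ⟨ν⟩
  haveI : SigmaFinite (volume : Measure (ℝ × ℝ)) := ‹SigmaFinite ν›
  exact integral_fin_nat_prod_eq_prod f

lemma aux_pi_integrable' {n : ℕ} (ν : Measure (ℝ × ℝ)) [SigmaFinite ν]
    {f : Fin n → (ℝ × ℝ) → ℝ} (hf : ∀ m, Integrable (f m) ν) :
    Integrable (fun y : Fin n → ℝ × ℝ => ∏ m, f m (y m)) (Measure.pi fun _ : Fin n => ν) := by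
  letI : MeasureSpace (ℝ × ℝ) := ⟨ν⟩
  haveI : SigmaFinite (volume : Measure (ℝ × ℝ)) := ‹SigmaFinite ν›
  exact Integrable.fin_nat_prod hf

lemma aux_repr4' {n : ℕ} (i j k l : Fin n) (y : Fin n → ℝ × ℝ) :
    (y i).1 * (y j).1 * (y k).1 * (y l).2 =
      ∏ m, ((y m).1 ^ ((if i = m then 1 else 0) + (if j = m then 1 else 0) +
        (if k = m then 1 else 0)) * (y m).2 ^ (if l = m then 1 else 0)) := by
  simp only [pow_add, Finset.prod_mul_distrib, pow_ite, pow_one, pow_zero,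
    Finset.prod_ite_eq, Finset.mem_univ, if_true]

lemma aux_repr2' {n : ℕ} (i j : Fin n) (y : Fin n → ℝ × ℝ) :
    (y i).1 * (y j).2 =
      ∏ m, ((y m).1 ^ (if i = m then 1 else 0) * (y m).2 ^ (if j = m then 1 else 0)) := by
  simp only [Finset.prod_mul_distrib, pow_ite, pow_one, pow_zero,
    Finset.prod_ite_eq, Finset.mem_univ, if_true]

variable (ν : Measure (ℝ × ℝ)) [IsProbabilityMeasure ν]

lemma aux_mom_integrable'
    (hint4 : Integrable (fun p : ℝ × ℝ => p.1 ^ 4) ν)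
    (hintw : Integrable (fun p : ℝ × ℝ => p.2 ^ 2) ν)
    (hint31 : Integrable (fun p : ℝ × ℝ => p.1 ^ 3 * p.2) ν)
    (a b : ℕ) (ha : a ≤ 3) (hb : b ≤ 1) :
    Integrable (fun p : ℝ × ℝ => p.1 ^ a * p.2 ^ b) ν := by
  have hg : Integrable (fun p : ℝ × ℝ => 1 + p.1 ^ 4 + p.2 ^ 2) ν :=
    ((integrable_const 1).add hint4).add hintw
  have hm : ∀ a b : ℕ, AEStronglyMeasurable (fun p : ℝ × ℝ => p.1 ^ a * p.2 ^ b) ν :=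
    fun a b => (((measurable_fst.pow_const a).mul (measurable_snd.pow_const b))).aestronglyMeasurable
  have key : ∀ a b : ℕ,
      (∀ p : ℝ × ℝ, |p.1| ^ a * |p.2| ^ b ≤ 1 + p.1 ^ 4 + p.2 ^ 2) →
      Integrable (fun p : ℝ × ℝ => p.1 ^ a * p.2 ^ b) ν := by
    intro a b hbd
    refine hg.mono' (hm a b) (Filter.Eventually.of_forall fun p => ?_)
    rw [Real.norm_eq_abs, abs_mul, abs_pow, abs_pow]
    exact hbd p
  interval_cases a <;> interval_cases b
  · simpa using (integrable_const (1:ℝ))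
  · refine key 0 1 fun p => ?_
    nlinarith [sq_abs p.2, sq_nonneg (|p.2| - 1), abs_nonneg p.2, sq_nonneg p.1, sq_nonneg (p.1^2)]
  · refine key 1 0 fun p => ?_
    nlinarith [sq_abs p.1, sq_nonneg (|p.1| - 1), abs_nonneg p.1, sq_nonneg (p.1 ^ 2 - 1),
      sq_nonneg p.2]
  · refine key 1 1 fun p => ?_
    nlinarith [sq_abs p.1, sq_abs p.2, sq_nonneg (|p.1| - |p.2|), abs_nonneg p.1, abs_nonneg p.2,
      sq_nonneg (p.1 ^ 2 - 1)]
  · refine key 2 0 fun p => ?_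
    nlinarith [sq_abs p.1, sq_nonneg (p.1 ^ 2 - 1), sq_nonneg p.2]
  · refine key 2 1 fun p => ?_
    nlinarith [sq_abs p.1, sq_abs p.2, sq_nonneg (p.1 ^ 2 - |p.2|), abs_nonneg p.2, sq_nonneg p.1]
  · refine key 3 0 fun p => ?_
    nlinarith [sq_abs p.1, abs_nonneg p.1, sq_nonneg (p.1 ^ 2 - |p.1|), sq_nonneg (p.1 ^ 2 - 1),
      sq_nonneg p.2]
  · simpa using hint31

lemma aux_quad_integrable'
    (hint4 : Integrable (fun p : ℝ × ℝ => p.1 ^ 4) ν)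
    (hintw : Integrable (fun p : ℝ × ℝ => p.2 ^ 2) ν)
    (hint31 : Integrable (fun p : ℝ × ℝ => p.1 ^ 3 * p.2) ν)
    {n : ℕ} (i j k l : Fin n) :
    Integrable (fun y : Fin n → ℝ × ℝ => (y i).1 * (y j).1 * (y k).1 * (y l).2)
      (Measure.pi fun _ : Fin n => ν) := by
  simp_rw [aux_repr4' i j k l]
  exact aux_pi_integrable' ν fun m =>
    aux_mom_integrable' ν hint4 hintw hint31 _ _ (by split_ifs <;> norm_num)
      (by split_ifs <;> norm_num)

lemma aux_pair_integrable'
    (hint4 : Integrable (fun p : ℝ × ℝ => p.1 ^ 4) ν)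
    (hintw : Integrable (fun p : ℝ × ℝ => p.2 ^ 2) ν)
    (hint31 : Integrable (fun p : ℝ × ℝ => p.1 ^ 3 * p.2) ν)
    {n : ℕ} (i j : Fin n) :
    Integrable (fun y : Fin n → ℝ × ℝ => (y i).1 * (y j).2)
      (Measure.pi fun _ : Fin n => ν) := by
  simp_rw [aux_repr2' i j]
  exact aux_pi_integrable' ν fun m =>
    aux_mom_integrable' ν hint4 hintw hint31 _ _ (by split_ifs <;> norm_num)
      (by split_ifs <;> norm_num)

lemma aux_int2' (hmu : ∫ p, p.1 ∂ν = 0) (huw : ∫ p, p.1 * p.2 ∂ν = 0)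
    {n : ℕ} (i j : Fin n) :
    ∫ y, (y i).1 * (y j).2 ∂(Measure.pi fun _ : Fin n => ν) = 0 := by
  simp_rw [aux_repr2' i j]
  rw [aux_pi_integral' ν
    (fun m p => p.1 ^ (if i = m then 1 else 0) * p.2 ^ (if j = m then 1 else 0))]
  refine Finset.prod_eq_zero (Finset.mem_univ i) ?_
  by_cases hj : j = i
  · simp only [if_pos rfl, if_pos hj, pow_one]
    simpa using huw
  · simp only [if_pos rfl, if_neg hj, pow_one, pow_zero, mul_one]
    simpa using hmu

lemma aux_int4' (hmu : ∫ p, p.1 ∂ν = 0) (hmw : ∫ p, p.2 ∂ν = 0)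
    (huw : ∫ p, p.1 * p.2 ∂ν = 0) {n : ℕ} (i j k l : Fin n) :
    ∫ y, (y i).1 * (y j).1 * (y k).1 * (y l).2 ∂(Measure.pi fun _ : Fin n => ν) =
      if i = j ∧ j = k ∧ k = l then ∫ p, p.1 ^ 3 * p.2 ∂ν else 0 := by
  simp_rw [aux_repr4' i j k l]
  rw [aux_pi_integral' ν (fun m p => p.1 ^ ((if i = m then 1 else 0) + (if j = m then 1 else 0) +
    (if k = m then 1 else 0)) * p.2 ^ (if l = m then 1 else 0))]
  by_cases h : i = j ∧ j = k ∧ k = l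
  · obtain ⟨h1, h2, h3⟩ := h
    subst h1; subst h2; subst h3
    rw [if_pos ⟨rfl, rfl, rfl⟩]
    have : ∀ m : Fin n,
        (∫ p : ℝ × ℝ, p.1 ^ ((if i = m then 1 else 0) + (if i = m then 1 else 0) +
          (if i = m then 1 else 0)) * p.2 ^ (if i = m then 1 else 0) ∂ν) =
        if i = m then ∫ p, p.1 ^ 3 * p.2 ∂ν else 1 := by
      intro m
      by_cases him : i = m
      · simp [him]
      · simp [him]
    rw [Finset.prod_congr rfl fun m _ => this m, Finset.prod_ite_eq]
    simp
  · rw [if_neg h]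
    by_cases hi : i = l <;> by_cases hj : j = l <;> by_cases hk : k = l
    · exact absurd ⟨hi.trans hj.symm, hj.trans hk.symm, hk⟩ h
    · refine Finset.prod_eq_zero (Finset.mem_univ k) ?_
      have h1 : i ≠ k := fun hc => hk (hc ▸ hi)
      have h2 : j ≠ k := fun hc => hk (hc ▸ hj)
      have h3 : l ≠ k := fun hc => hk hc.symm
      simp only [if_neg h1, if_neg h2, if_pos rfl, if_neg h3, pow_one, pow_zero, mul_one]
      simpa using hmu
    · refine Finset.prod_eq_zero (Finset.mem_univ j) ?_
      have h1 : i ≠ j := fun hc => hj (hc ▸ hi)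
      have h2 : k ≠ j := fun hc => hj (hc ▸ hk)
      have h3 : l ≠ j := fun hc => hj hc.symm
      simp only [if_neg h1, if_neg h2, if_pos rfl, if_neg h3, pow_one, pow_zero, mul_one]
      simpa using hmu
    · refine Finset.prod_eq_zero (Finset.mem_univ l) ?_
      simp only [if_pos hi, if_neg hj, if_neg hk, if_pos rfl, pow_one, pow_zero]
      simpa using huw
    · refine Finset.prod_eq_zero (Finset.mem_univ i) ?_
      have h1 : j ≠ i := fun hc => hi (hc ▸ hj)
      have h2 : k ≠ i := fun hc => hi (hc ▸ hk)
      have h3 : l ≠ i := fun hc => hi hc.symm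
      simp only [if_neg h1, if_neg h2, if_pos rfl, if_neg h3, pow_one, pow_zero, mul_one]
      simpa using hmu
    · refine Finset.prod_eq_zero (Finset.mem_univ l) ?_
      simp only [if_neg hi, if_pos hj, if_neg hk, if_pos rfl, pow_one, pow_zero]
      simpa using huw
    · refine Finset.prod_eq_zero (Finset.mem_univ l) ?_
      simp only [if_neg hi, if_neg hj, if_pos hk, if_pos rfl, pow_one, pow_zero]
      simpa using huw
    · refine Finset.prod_eq_zero (Finset.mem_univ l) ?_
      simp only [if_neg hi, if_neg hj, if_neg hk, if_pos rfl, pow_one, pow_zero]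
      simpa using hmw

omit [IsProbabilityMeasure ν] in
lemma aux_cov'
    {α : Type*} [MeasurableSpace α] (Pr : Measure α)
    (hmu : ∫ p, p.1 ∂ν = 0) (hmw : ∫ p, p.2 ∂ν = 0)
    (huw : ∫ p, p.1 * p.2 ∂ν = 0)
    (hint4 : Integrable (fun p : ℝ × ℝ => p.1 ^ 4) ν)
    (hintw : Integrable (fun p : ℝ × ℝ => p.2 ^ 2) ν)
    (hint31 : Integrable (fun p : ℝ × ℝ => p.1 ^ 3 * p.2) ν)
    [IsProbabilityMeasure ν]
    {n : ℕ} (x : α → Fin n → ℝ × ℝ) (hx : Measurable x)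
    (hmap : Measure.map x Pr = (Measure.pi fun _ : Fin n => ν))
    (P : Matrix (Fin n) (Fin n) ℝ) :
    (∫ ω, (∑ i, ∑ j, (x ω i).1 * (x ω j).1 * P i j) *
        (∑ i, ∑ j, (x ω i).1 * (x ω j).2 * P i j) ∂Pr -
      (∫ ω, ∑ i, ∑ j, (x ω i).1 * (x ω j).1 * P i j ∂Pr) *
        (∫ ω, ∑ i, ∑ j, (x ω i).1 * (x ω j).2 * P i j ∂Pr)) =
      (∫ p, p.1 ^ 3 * p.2 ∂ν) * ∑ i, (P i i) ^ 2 := by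
  set μpi := (Measure.pi fun _ : Fin n => ν) with hμpi
  set F : (Fin n → ℝ × ℝ) → ℝ := fun y => ∑ i, ∑ j, (y i).1 * (y j).1 * P i j with hF
  set G : (Fin n → ℝ × ℝ) → ℝ := fun y => ∑ i, ∑ j, (y i).1 * (y j).2 * P i j with hG
  have hFm : Measurable F :=
    Finset.measurable_sum _ fun i _ => Finset.measurable_sum _ fun j _ =>
      (((measurable_fst.comp (measurable_pi_apply i)).mul
        (measurable_fst.comp (measurable_pi_apply j))).mul_const _)
  have hGm : Measurable G :=
    Finset.measurable_sum _ fun i _ => Finset.measurable_sum _ fun j _ =>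
      (((measurable_fst.comp (measurable_pi_apply i)).mul
        (measurable_snd.comp (measurable_pi_apply j))).mul_const _)
  have e1 : (∫ ω, F (x ω) * G (x ω) ∂Pr) = ∫ y, F y * G y ∂μpi := by
    rw [← hmap, integral_map hx.aemeasurable (f := fun y => F y * G y)
      (hFm.mul hGm).aestronglyMeasurable]
  have e2 : (∫ ω, F (x ω) ∂Pr) = ∫ y, F y ∂μpi := by
    rw [← hmap, integral_map hx.aemeasurable hFm.aestronglyMeasurable]
  have e3 : (∫ ω, G (x ω) ∂Pr) = ∫ y, G y ∂μpi := by
    rw [← hmap, integral_map hx.aemeasurable hGm.aestronglyMeasurable]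
  have hG0 : ∫ y, G y ∂μpi = 0 := by
    rw [hG]
    beta_reduce
    rw [hμpi]
    rw [integral_finset_sum _ (f := fun i (y : Fin n → ℝ × ℝ) => ∑ j, (y i).1 * (y j).2 * P i j) fun i _ => integrable_finset_sum _ fun j _ =>
      (aux_pair_integrable' ν hint4 hintw hint31 i j).mul_const _]
    refine Finset.sum_eq_zero fun i _ => ?_
    rw [integral_finset_sum _ (f := fun j (y : Fin n → ℝ × ℝ) => (y i).1 * (y j).2 * P i j) fun j _ =>
      (aux_pair_integrable' ν hint4 hintw hint31 i j).mul_const _]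
    refine Finset.sum_eq_zero fun j _ => ?_
    rw [integral_mul_const, aux_int2' ν hmu huw i j, zero_mul]
  have hFG : ∫ y, F y * G y ∂μpi = (∫ p, p.1 ^ 3 * p.2 ∂ν) * ∑ i, (P i i) ^ 2 := by
    have expand : ∀ y : Fin n → ℝ × ℝ, F y * G y =
        ∑ i, ∑ j, ∑ k, ∑ l, ((y k).1 * (y l).1 * (y i).1 * (y j).2) * (P k l * P i j) := by
      intro y
      rw [hF, hG]
      simp only [Finset.sum_mul, Finset.mul_sum]
      exact Finset.sum_congr rfl fun i _ => Finset.sum_congr rfl fun j _ =>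
        Finset.sum_congr rfl fun k _ => Finset.sum_congr rfl fun l _ => by ring
    simp_rw [expand]
    have I1 : ∀ (i j k l : Fin n), Integrable
        (fun y : Fin n → ℝ × ℝ => ((y k).1 * (y l).1 * (y i).1 * (y j).2) * (P k l * P i j))
        μpi :=
      fun i j k l => (aux_quad_integrable' ν hint4 hintw hint31 k l i j).mul_const _
    rw [integral_finset_sum _ fun i _ => integrable_finset_sum _ fun j _ =>
      integrable_finset_sum _ fun k _ => integrable_finset_sum _ fun l _ => I1 i j k l]
    have : ∀ i : Fin n,
        (∫ y, ∑ j, ∑ k, ∑ l, ((y k).1 * (y l).1 * (y i).1 * (y j).2) * (P k l * P i j) ∂μpi)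
        = ∑ j, ∑ k, ∑ l,
            (if k = l ∧ l = i ∧ i = j then ∫ p, p.1 ^ 3 * p.2 ∂ν else 0) * (P k l * P i j) := by
      intro i
      rw [integral_finset_sum _ fun j _ => integrable_finset_sum _ fun k _ =>
        integrable_finset_sum _ fun l _ => I1 i j k l]
      refine Finset.sum_congr rfl fun j _ => ?_
      rw [integral_finset_sum _ fun k _ => integrable_finset_sum _ fun l _ => I1 i j k l]
      refine Finset.sum_congr rfl fun k _ => ?_
      rw [integral_finset_sum _ fun l _ => I1 i j k l]
      refine Finset.sum_congr rfl fun l _ => ?_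
      rw [integral_mul_const, aux_int4' ν hmu hmw huw k l i j]
    rw [Finset.sum_congr rfl fun i _ => this i]
    simp only [ite_mul, zero_mul, ite_and, Finset.sum_ite_eq, Finset.mem_univ, if_true,
      Finset.sum_ite_irrel, Finset.sum_const_zero, Finset.sum_ite_eq']
    rw [Finset.mul_sum]
    exact Finset.sum_congr rfl fun i _ => by ring
  rw [e1, e2, e3, hG0, hFG, mul_zero, sub_zero]

end AuxCovQuadratic

/-- Let `(uᵢ, wᵢ)` be i.i.d. mean-zero pairs with `E[uᵢ wᵢ] = 0` and
`E[uᵢ³ wᵢ]` finite, and `P` a fixed symmetric idempotent `n × n` matrix of rank `k`.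
Then `Cov(uᵀPu, uᵀPw) = E[u₁³ w₁] ∑ᵢ Pᵢᵢ²`. Consequently, along designs with
`(1/k) ∑ᵢ Pᵢᵢ² → 0`, the normalized quantities `(uᵀPu - kσ_u²)/√k` and `uᵀPw/√k`
are asymptotically uncorrelated. -/
theorem cov_quadratic_cross_form
    {α : Type*} [MeasurableSpace α] (Pr : Measure α) [IsProbabilityMeasure Pr]
    (ν : Measure (ℝ × ℝ)) [IsProbabilityMeasure ν]
    (hmu : ∫ p, p.1 ∂ν = 0) (hmw : ∫ p, p.2 ∂ν = 0)
    (huw : ∫ p, p.1 * p.2 ∂ν = 0)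
    (hint4 : Integrable (fun p => p.1 ^ 4) ν)
    (hintw : Integrable (fun p => p.2 ^ 2) ν)
    (hint31 : Integrable (fun p => p.1 ^ 3 * p.2) ν) :
    ((∀ (n k : ℕ) (x : α → Fin n → ℝ × ℝ), Measurable x →
      Measure.map x Pr = (Measure.pi fun _ : Fin n => ν) →
      ∀ (P : Matrix (Fin n) (Fin n) ℝ), Pᵀ = P → P * P = P → P.rank = k →
      (∫ ω, (∑ i, ∑ j, (x ω i).1 * (x ω j).1 * P i j) *
          (∑ i, ∑ j, (x ω i).1 * (x ω j).2 * P i j) ∂Pr -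
        (∫ ω, ∑ i, ∑ j, (x ω i).1 * (x ω j).1 * P i j ∂Pr) *
          (∫ ω, ∑ i, ∑ j, (x ω i).1 * (x ω j).2 * P i j ∂Pr)) =
        (∫ p, p.1 ^ 3 * p.2 ∂ν) * ∑ i, (P i i) ^ 2) ∧
    (∀ (nseq kseq : ℕ → ℕ) (x : ∀ m : ℕ, α → Fin (nseq m) → ℝ × ℝ)
        (P : ∀ m : ℕ, Matrix (Fin (nseq m)) (Fin (nseq m)) ℝ),
      (∀ m, Measurable (x m)) →
      (∀ m, Measure.map (x m) Pr = (Measure.pi fun _ : Fin (nseq m) => ν)) →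
      (∀ m, (P m)ᵀ = P m) → (∀ m, P m * P m = P m) → (∀ m, (P m).rank = kseq m) →
      Tendsto (fun m => (kseq m : ℝ)) atTop atTop →
      Tendsto (fun m => (1 / (kseq m : ℝ)) * ∑ i, (P m i i) ^ 2) atTop (nhds 0) →
      Tendsto (fun m =>
          (∫ ω, ((∑ i, ∑ j, (x m ω i).1 * (x m ω j).1 * P m i j) / Real.sqrt (kseq m)) *
              ((∑ i, ∑ j, (x m ω i).1 * (x m ω j).2 * P m i j) / Real.sqrt (kseq m)) ∂Pr -
            (∫ ω, (∑ i, ∑ j, (x m ω i).1 * (x m ω j).1 * P m i j) / Real.sqrt (kseq m) ∂Pr) *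
              (∫ ω, (∑ i, ∑ j, (x m ω i).1 * (x m ω j).2 * P m i j) / Real.sqrt (kseq m) ∂Pr)))
        atTop (nhds 0))) := by
  constructor
  · intro n k x hx hmap P _ _ _
    exact aux_cov' ν Pr hmu hmw huw hint4 hintw hint31 x hx hmap P
  · intro nseq kseq x P hxm hmap hPt hPP hrk hk h0
    have hlim : Tendsto (fun m => (∫ p, p.1 ^ 3 * p.2 ∂ν) *
        ((1 / (kseq m : ℝ)) * ∑ i, (P m i i) ^ 2)) atTop (nhds 0) := by
      simpa using h0.const_mul (∫ p, p.1 ^ 3 * p.2 ∂ν)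
    refine Tendsto.congr' ?_ hlim
    filter_upwards [hk.eventually_ge_atTop 1] with m hm
    have hkpos : (0:ℝ) < (kseq m : ℝ) := lt_of_lt_of_le one_pos hm
    have hk0 : (kseq m : ℝ) ≠ 0 := ne_of_gt hkpos
    have hss : Real.sqrt (kseq m) * Real.sqrt (kseq m) = (kseq m : ℝ) :=
      Real.mul_self_sqrt (le_of_lt hkpos)
    have hcov := aux_cov' ν Pr hmu hmw huw hint4 hintw hint31 (x m) (hxm m) (hmap m) (P m)
    simp only [div_mul_div_comm]
    rw [integral_div, integral_div, integral_div, div_mul_div_comm, ← sub_div, hcov, hss]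
    field_simp
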